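/- arXiv:1402.5529 — 6 statements merged into one kernel-verified Lean document; each statement's English description precedes it below -/
import Mathlib

section
/- Let j > 0, δ > 0 and let u, v ∈ 𝓤_δ. Then the cut-and-paste operator is a contraction in total variation: |K^{(δ)}u − K^{(δ)}v|₁ ≤ |u − v|₁. -/
open MeasureTheory Set Filter

noncomputable section

/-- An element of the space `𝓤`: an atom `u.1 ≥ 0` at the origin together with a
density `u.2` on `ℝ₊`, representing the measure `u.1 δ₀ + u.2 dr`. -/
abbrev UEl := ℝ × (ℝ → ℝ)

/-- Membership in `𝓤`: nonnegative atom, nonnegative density which is in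
`L¹(ℝ₊) ∩ L^∞(ℝ₊)`. -/
def memU (u : UEl) : Prop :=
  0 ≤ u.1 ∧ (∀ r, 0 ≤ u.2 r) ∧
    Integrable u.2 (volume.restrict (Set.Ioi (0:ℝ))) ∧
    ∃ M : ℝ, ∀ r, u.2 r ≤ M

/-- The tail function `F(r; u) = c_u 𝟙_{{0}}(r) + ∫_r^∞ ρ_u`. -/
def tailF (u : UEl) (r : ℝ) : ℝ :=
  (if r = 0 then u.1 else 0) + ∫ x in Set.Ioi r, u.2 x

/-- Total variation distance `|u − v|₁ = |c_u − c_v| + ∫₀^∞ |ρ_u − ρ_v|`. -/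
def dist1 (u v : UEl) : ℝ :=
  |u.1 - v.1| + ∫ r in Set.Ioi (0:ℝ), |u.2 r - v.2 r|

/-- Membership in `𝓤_δ`: in `𝓤` and the density has mass `> jδ`. -/
def memUdelta (j δ : ℝ) (u : UEl) : Prop :=
  memU u ∧ j * δ < ∫ r in Set.Ioi (0:ℝ), u.2 r

/-- `R_δ(u) = inf {r ≥ 0 : F(r; u) = jδ}`. -/
def Rdelta (j δ : ℝ) (u : UEl) : ℝ :=
  sInf {r : ℝ | 0 ≤ r ∧ tailF u r = j * δ}

/-- The cut-and-paste operator `K^{(δ)} u = (jδ, ρ_u 𝟙_{[0, R_δ(u)]})`. -/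
def cutPaste (j δ : ℝ) (u : UEl) : UEl :=
  (j * δ, Set.indicator (Set.Icc 0 (Rdelta j δ u)) u.2)

/-- The Neumann heat kernel on `ℝ₊`. -/
def Gneum (t r r' : ℝ) : ℝ :=
  (Real.sqrt (2 * Real.pi * t))⁻¹ *
    (Real.exp (-(r - r')^2 / (2*t)) + Real.exp (-(r + r')^2 / (2*t)))

/-- The Neumann heat semigroup acting on `𝓤`: the result has zero atom and density
`r ↦ c_u G_t(r,0) + ∫₀^∞ G_t(r,r') ρ_u(r') dr'`. -/
def heat (t : ℝ) (u : UEl) : UEl :=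
  (0, fun r => u.1 * Gneum t r 0 + ∫ r' in Set.Ioi (0:ℝ), Gneum t r r' * u.2 r')

/-- Mass-transport partial order: `u ≤ v` iff `F(r;u) ≤ F(r;v)` for all `r ≥ 0`. -/
def Ule (u v : UEl) : Prop := ∀ r : ℝ, 0 ≤ r → tailF u r ≤ tailF v r

/-- Partial order modulo `m`: `F(r;u) ≤ F(r;v) + m` for all `r ≥ 0`. -/
def UleMod (u v : UEl) (m : ℝ) : Prop :=
  ∀ r : ℝ, 0 ≤ r → tailF u r ≤ tailF v r + m

/-- The lower barrier `S^{(δ,−)}_{kδ}(u)`. -/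
def Sminus (j δ : ℝ) (u : UEl) : ℕ → UEl
  | 0 => u
  | k+1 => cutPaste j δ (heat δ (Sminus j δ u k))

/-- The upper barrier `S^{(δ,+)}_{kδ}(u)`. -/
def Splus (j δ : ℝ) (u : UEl) : ℕ → UEl
  | 0 => u
  | k+1 => heat δ (cutPaste j δ (Splus j δ u k))

/-- A nonnegative density in `L¹(ℝ₊) ∩ L^∞(ℝ₊)`. -/
def goodFn (u : ℝ → ℝ) : Prop :=
  (∀ r, 0 ≤ u r) ∧ Integrable u (volume.restrict (Set.Ioi (0:ℝ))) ∧
    ∃ M : ℝ, ∀ r, u r ≤ M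

/-- Mass-transport order on densities: `∫_r^∞ u ≤ ∫_r^∞ v` for all `r ≥ 0`. -/
def fnLe (u v : ℝ → ℝ) : Prop :=
  ∀ r : ℝ, 0 ≤ r → (∫ x in Set.Ioi r, u x) ≤ ∫ x in Set.Ioi r, v x

end


/-!
If `R_δ(u) ≤ R_δ(v)`, the two cut densities coincide with `ρ_u, ρ_v` on `[0, R_δ(u)]` and their
difference is `ρ_v` on `(R_δ(u), R_δ(v)]`. Since both densities carry the tail mass `jδ` beyond
their cut points, the mass of `ρ_v` on that interval is `∫_{R_δ(u)}^∞ (ρ_v - ρ_u)`, which is at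
most the `L¹` distance beyond `R_δ(u)`. The atoms of both cut measures are `jδ`.
-/

section IntegralIoi

variable {f g : ℝ → ℝ} {m a b : ℝ}

theorem exists_integral_Ioi_eq (hf : IntegrableOn f (Ioi 0)) (hm : 0 < m)
    (hmf : m < ∫ x in Ioi 0, f x) : ∃ r, 0 ≤ r ∧ ∫ x in Ioi r, f x = m := by
  obtain ⟨c, hc0, hcm⟩ : ∃ c : ℝ, 0 ≤ c ∧ ∫ x in Ioi c, f x < m :=
    ((eventually_ge_atTop 0).and
      ((tendsto_integral_Ioi_zero tendsto_id).eventually (gt_mem_nhds hm))).exists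
  obtain ⟨r, hr, hfr⟩ := intermediate_value_Icc' hc0
    (hf.continuousOn_Ici_primitive_Ioi.mono Icc_subset_Ici_self) ⟨hcm.le, hmf.le⟩
  exact ⟨r, hr.1, hfr⟩

theorem csInf_mem_setOf_integral_Ioi_eq (hf : IntegrableOn f (Ioi 0)) (hm : 0 < m)
    (hmf : m < ∫ x in Ioi 0, f x) :
    sInf {r | 0 ≤ r ∧ ∫ x in Ioi r, f x = m} ∈ {r | 0 ≤ r ∧ ∫ x in Ioi r, f x = m} :=
  IsClosed.csInf_mem
    (hf.continuousOn_Ici_primitive_Ioi.preimage_isClosed_of_isClosed isClosed_Ici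
      isClosed_singleton)
    (exists_integral_Ioi_eq hf hm hmf) ⟨0, fun _ hr => hr.1⟩

theorem integral_abs_indicator_Icc_sub_le_of_le (hf : IntegrableOn f (Ioi 0))
    (hg : IntegrableOn g (Ioi 0)) (hg0 : ∀ x, 0 ≤ g x) (ha : 0 ≤ a) (hab : a ≤ b)
    (hfg : ∫ x in Ioi a, f x = ∫ x in Ioi b, g x) :
    ∫ x in Ioi 0, |(Icc 0 a).indicator f x - (Icc 0 b).indicator g x| ≤
      ∫ x in Ioi 0, |f x - g x| := by
  set F := (Icc 0 a).indicator f
  set G := (Icc 0 b).indicator g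
  have hFG : IntegrableOn (fun x => |F x - G x|) (Ioi 0) :=
    ((hf.indicator measurableSet_Icc).sub (hg.indicator measurableSet_Icc)).abs
  have hfg_abs : IntegrableOn (fun x => |f x - g x|) (Ioi 0) := (hf.sub hg).abs
  have hf_a : IntegrableOn f (Ioi a) := hf.mono_set (Ioi_subset_Ioi ha)
  have hg_a : IntegrableOn g (Ioi a) := hg.mono_set (Ioi_subset_Ioi ha)
  have below_a : ∫ x in 0..a, |F x - G x| = ∫ x in 0..a, |f x - g x| := by
    refine intervalIntegral.integral_congr fun x hx => ?_
    rw [uIcc_of_le ha] at hx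
    simp only [F, G, indicator_of_mem hx, indicator_of_mem (Icc_subset_Icc_right hab hx)]
  have above_a : ∫ x in Ioi a, |F x - G x| = ∫ x in a..b, g x := by
    calc ∫ x in Ioi a, |F x - G x| = ∫ x in Ioi a, G x :=
          setIntegral_congr_fun measurableSet_Ioi fun x hx => by
            simp only [F, indicator_of_notMem (fun h : x ∈ Icc 0 a => (not_le.2 hx) h.2),
              zero_sub, abs_neg]
            exact abs_of_nonneg (indicator_nonneg (fun y _ => hg0 y) x)
      _ = ∫ x in Ioc a b, g x := by
          have : Ioi a ∩ Icc 0 b = Ioc a b := Set.ext fun x =>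
            ⟨fun ⟨hax, _, hxb⟩ => ⟨hax, hxb⟩, fun ⟨hax, hxb⟩ => ⟨hax, ha.trans hax.le, hxb⟩⟩
          rw [setIntegral_indicator measurableSet_Icc, this]
      _ = ∫ x in a..b, g x := (intervalIntegral.integral_of_le hab).symm
  calc ∫ x in Ioi 0, |F x - G x|
      = (∫ x in 0..a, |F x - G x|) + ∫ x in Ioi a, |F x - G x| :=
        (intervalIntegral.integral_interval_add_Ioi hFG (hFG.mono_set (Ioi_subset_Ioi ha))).symm
    _ = (∫ x in 0..a, |f x - g x|) + ∫ x in Ioi a, (g x - f x) := by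
        rw [below_a, above_a, integral_sub hg_a hf_a, hfg,
          intervalIntegral.integral_Ioi_sub_Ioi hg_a hab]
    _ ≤ (∫ x in 0..a, |f x - g x|) + ∫ x in Ioi a, |f x - g x| := by
        refine add_le_add le_rfl (setIntegral_mono (hg_a.sub hf_a)
          (hfg_abs.mono_set (Ioi_subset_Ioi ha)) fun x => ?_)
        rw [abs_sub_comm]
        exact le_abs_self _
    _ = ∫ x in Ioi 0, |f x - g x| :=
        intervalIntegral.integral_interval_add_Ioi hfg_abs (hfg_abs.mono_set (Ioi_subset_Ioi ha))

theorem integral_abs_indicator_Icc_sub_le (hf : IntegrableOn f (Ioi 0))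
    (hg : IntegrableOn g (Ioi 0)) (hf0 : ∀ x, 0 ≤ f x) (hg0 : ∀ x, 0 ≤ g x) (ha : 0 ≤ a)
    (hb : 0 ≤ b) (hfg : ∫ x in Ioi a, f x = ∫ x in Ioi b, g x) :
    ∫ x in Ioi 0, |(Icc 0 a).indicator f x - (Icc 0 b).indicator g x| ≤
      ∫ x in Ioi 0, |f x - g x| := by
  rcases le_total a b with hab | hba
  · exact integral_abs_indicator_Icc_sub_le_of_le hf hg hg0 ha hab hfg
  · simpa only [abs_sub_comm] using
      integral_abs_indicator_Icc_sub_le_of_le hg hf hf0 hb hba hfg.symm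

end IntegralIoi

section CutPaste

variable {j δ : ℝ} {u : UEl}

theorem tailF_of_ne_zero {r : ℝ} (hr : r ≠ 0) : tailF u r = ∫ x in Ioi r, u.2 x := by
  simp [tailF, hr]

theorem Rdelta_eq (hc : 0 ≤ u.1) (hmass : j * δ < ∫ x in Ioi 0, u.2 x) :
    Rdelta j δ u = sInf {r | 0 ≤ r ∧ ∫ x in Ioi r, u.2 x = j * δ} := by
  unfold Rdelta
  congr 1
  ext r
  rcases eq_or_ne r 0 with rfl | hr
  · have htail : j * δ < tailF u 0 := by
      simp only [tailF, if_true]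
      linarith
    simp only [mem_ofPred_eq, le_refl, true_and]
    exact iff_of_false htail.ne' hmass.ne'
  · simp only [mem_ofPred_eq, tailF_of_ne_zero hr]

theorem Rdelta_nonneg_and_integral_Ioi_eq (hjδ : 0 < j * δ) (hc : 0 ≤ u.1)
    (hu : IntegrableOn u.2 (Ioi 0)) (hmass : j * δ < ∫ x in Ioi 0, u.2 x) :
    0 ≤ Rdelta j δ u ∧ ∫ x in Ioi (Rdelta j δ u), u.2 x = j * δ := by
  rw [Rdelta_eq hc hmass]
  exact csInf_mem_setOf_integral_Ioi_eq hu hjδ hmass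

end CutPaste

/-- the cut-and-paste operator is a contraction in total variation. -/
theorem cutPaste_contraction (j δ : ℝ) (hj : 0 < j) (hδ : 0 < δ)
    (u v : UEl) (hu : memUdelta j δ u) (hv : memUdelta j δ v) :
    dist1 (cutPaste j δ u) (cutPaste j δ v) ≤ dist1 u v := by
  obtain ⟨⟨hcu, hu0, hu_int, -⟩, hu_mass⟩ := hu
  obtain ⟨⟨hcv, hv0, hv_int, -⟩, hv_mass⟩ := hv
  obtain ⟨hRu, hIu⟩ := Rdelta_nonneg_and_integral_Ioi_eq (mul_pos hj hδ) hcu hu_int hu_mass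
  obtain ⟨hRv, hIv⟩ := Rdelta_nonneg_and_integral_Ioi_eq (mul_pos hj hδ) hcv hv_int hv_mass
  have hdensity := integral_abs_indicator_Icc_sub_le hu_int hv_int hu0 hv0 hRu hRv
    (hIu.trans hIv.symm)
  simp only [dist1, cutPaste, sub_self, abs_zero, zero_add]
  exact hdensity.trans (le_add_of_nonneg_left (abs_nonneg _))
end

section
/- Let j > 0, δ > 0 and let u, v ∈ 𝓤_δ. Then for every k ∈ ℕ the barrier maps are contractions in total variation: |S^{(δ,−)}_{kδ}(u) − S^{(δ,−)}_{kδ}(v)|₁ ≤ |u − v|₁ and |S^{(δ,+)}_{kδ}(u) − S^{(δ,+)}_{kδ}(v)|₁ ≤ |u − v|₁. -/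
open MeasureTheory Set Filter

/-!
The heat step is a Markov operator: the Neumann kernel is nonnegative and each of its columns has
mass one on `ℝ₊`, so `|G * u - G * v| ≤ G * |u - v|` pointwise and integrating gives the
contraction. The cut step, with `R_u ≤ R_v`, keeps both densities on `(0, R_u]`, so it only adds
`∫_{R_u}^{R_v} ρ_v`; since both tails beyond the cut points equal `jδ`, this is
`∫_{R_u}^∞ ρ_v - ∫_{R_u}^∞ ρ_u ≤ ∫_{R_u}^∞ |ρ_u - ρ_v|`, which is exactly what the cut discards
from `|u - v|₁` on `(R_u, ∞)` (the atoms become equal). Cutting needs density mass above `jδ`: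
heat turns total mass into density mass and the cut turns density mass into total mass, so the
barriers stay in the domain of the cut.
-/

open Real ProbabilityTheory Topology

section HeatKernel

variable {t : ℝ}

lemma Gneum_nonneg (t r r' : ℝ) : 0 ≤ Gneum t r r' := by
  unfold Gneum
  positivity

lemma Gneum_le (ht : 0 < t) (r r' : ℝ) : Gneum t r r' ≤ 2 * (√(2 * π * t))⁻¹ := by
  have hexp : ∀ x : ℝ, rexp (-x ^ 2 / (2 * t)) ≤ 1 := fun x =>
    exp_le_one_iff.2 (div_nonpos_of_nonpos_of_nonneg (by nlinarith [sq_nonneg x]) (by positivity))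
  unfold Gneum
  nlinarith [hexp (r - r'), hexp (r + r'), inv_nonneg.2 (sqrt_nonneg (2 * π * t))]

lemma continuous_Gneum : Continuous fun p : ℝ × ℝ => Gneum t p.1 p.2 := by
  unfold Gneum
  fun_prop

lemma Gneum_eq_gaussianPDFReal (ht : 0 ≤ t) (r r' : ℝ) :
    Gneum t r r' = gaussianPDFReal r' t.toNNReal r + gaussianPDFReal (-r') t.toNNReal r := by
  simp only [Gneum, gaussianPDFReal, coe_toNNReal t ht, sub_neg_eq_add]
  ring

lemma integrable_Gneum (ht : 0 ≤ t) (r' : ℝ) : Integrable fun r => Gneum t r r' := by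
  simp_rw [Gneum_eq_gaussianPDFReal ht]
  exact (integrable_gaussianPDFReal _ _).add (integrable_gaussianPDFReal _ _)

/-- The image term `G(r, -r')` folds `(-∞, 0]` onto `ℝ₊`, so the two halves make up a whole
Gaussian. -/
lemma integral_Ioi_Gneum (ht : 0 < t) (r' : ℝ) : ∫ r in Ioi 0, Gneum t r r' = 1 := by
  have hreflect : ∀ r, gaussianPDFReal (-r') t.toNNReal r = gaussianPDFReal r' t.toNNReal (-r) := by
    intro r
    simp only [gaussianPDFReal]
    ring_nf
  have hp := integrable_gaussianPDFReal r' t.toNNReal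
  simp_rw [Gneum_eq_gaussianPDFReal ht.le, hreflect]
  rw [integral_add hp.integrableOn hp.comp_neg.integrableOn, integral_comp_neg_Ioi, neg_zero,
    add_comm, intervalIntegral.integral_Iic_add_Ioi hp.integrableOn hp.integrableOn,
    integral_gaussianPDFReal_eq_one r' (by simpa using ht)]

variable {f : ℝ → ℝ}

lemma integrableOn_Gneum_mul (ht : 0 < t) (hf : IntegrableOn f (Ioi 0)) (r : ℝ) :
    IntegrableOn (fun r' => Gneum t r r' * f r') (Ioi 0) :=
  hf.bdd_mul (continuous_Gneum.comp (Continuous.prodMk_right r)).aestronglyMeasurable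
    (ae_of_all _ fun r' => by
      simpa only [norm_eq_abs, abs_of_nonneg (Gneum_nonneg t r r')] using Gneum_le ht r r')

lemma integrable_Gneum_mul_prod (ht : 0 < t) (hf : IntegrableOn f (Ioi 0)) :
    Integrable (fun p : ℝ × ℝ => Gneum t p.1 p.2 * f p.2)
      ((volume.restrict (Ioi 0)).prod (volume.restrict (Ioi 0))) := by
  have hmeas : AEStronglyMeasurable (fun p : ℝ × ℝ => Gneum t p.1 p.2 * f p.2)
      ((volume.restrict (Ioi 0)).prod (volume.restrict (Ioi 0))) :=
    continuous_Gneum.aestronglyMeasurable.mul hf.1.comp_snd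
  refine (integrable_prod_iff' hmeas).2
    ⟨ae_of_all _ fun r' => (integrable_Gneum ht.le r').integrableOn.mul_const (f r'), ?_⟩
  refine hf.abs.congr ((ae_restrict_mem measurableSet_Ioi).mono fun r' hr' => ?_)
  simp only [norm_mul, norm_eq_abs, abs_of_nonneg (Gneum_nonneg t _ r'), integral_mul_const,
    integral_Ioi_Gneum ht, one_mul]

lemma integrableOn_Gneum_conv (ht : 0 < t) (hf : IntegrableOn f (Ioi 0)) :
    IntegrableOn (fun r => ∫ r' in Ioi 0, Gneum t r r' * f r') (Ioi 0) :=
  (integrable_Gneum_mul_prod ht hf).integral_prod_left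

lemma integral_Ioi_Gneum_conv (ht : 0 < t) (hf : IntegrableOn f (Ioi 0)) :
    ∫ r in Ioi 0, ∫ r' in Ioi 0, Gneum t r r' * f r' = ∫ r' in Ioi 0, f r' := by
  rw [integral_integral_swap (integrable_Gneum_mul_prod ht hf)]
  simp only [integral_mul_const, integral_Ioi_Gneum ht, one_mul]

end HeatKernel

noncomputable def totalMass (u : UEl) : ℝ :=
  u.1 + ∫ r in Ioi 0, u.2 r

structure IsNonnegL1 (u : UEl) : Prop where
  atom_nonneg : 0 ≤ u.1
  density_nonneg : ∀ r, 0 ≤ u.2 r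
  integrableOn : IntegrableOn u.2 (Ioi 0)

lemma memU.isNonnegL1 {u : UEl} (hu : memU u) : IsNonnegL1 u :=
  ⟨hu.1, hu.2.1, hu.2.2.1⟩

lemma dist1_comm (u v : UEl) : dist1 u v = dist1 v u := by
  simp only [dist1, abs_sub_comm]

section Heat

variable {t : ℝ} {u v : UEl}

lemma integrableOn_heat (ht : 0 < t) (hu : IntegrableOn u.2 (Ioi 0)) :
    IntegrableOn (heat t u).2 (Ioi 0) :=
  ((integrable_Gneum ht.le 0).integrableOn.const_mul u.1).add (integrableOn_Gneum_conv ht hu)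

lemma integral_heat (ht : 0 < t) (hu : IntegrableOn u.2 (Ioi 0)) :
    ∫ r in Ioi 0, (heat t u).2 r = totalMass u := by
  rw [heat, integral_add ((integrable_Gneum ht.le 0).integrableOn.const_mul u.1)
    (integrableOn_Gneum_conv ht hu), integral_const_mul, integral_Ioi_Gneum ht, mul_one,
    integral_Ioi_Gneum_conv ht hu, totalMass]

lemma IsNonnegL1.heat (ht : 0 < t) (hu : IsNonnegL1 u) : IsNonnegL1 (heat t u) where
  atom_nonneg := le_rfl
  density_nonneg r := add_nonneg (mul_nonneg hu.atom_nonneg (Gneum_nonneg t r 0))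
    (integral_nonneg fun r' => mul_nonneg (Gneum_nonneg t r r') (hu.density_nonneg r'))
  integrableOn := integrableOn_heat ht hu.integrableOn

lemma heat_density_sub (ht : 0 < t) (hu : IntegrableOn u.2 (Ioi 0))
    (hv : IntegrableOn v.2 (Ioi 0)) (r : ℝ) :
    (heat t u).2 r - (heat t v).2 r = (heat t (u.1 - v.1, fun r => u.2 r - v.2 r)).2 r := by
  simp only [heat, mul_sub,
    integral_sub (integrableOn_Gneum_mul ht hu r) (integrableOn_Gneum_mul ht hv r)]
  ring

lemma abs_heat_density_le (r : ℝ) :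
    |(heat t u).2 r| ≤ (heat t (|u.1|, fun r => |u.2 r|)).2 r := by
  have hconv : |∫ r' in Ioi 0, Gneum t r r' * u.2 r'| ≤ ∫ r' in Ioi 0, Gneum t r r' * |u.2 r'| := by
    simpa only [norm_eq_abs, abs_mul, abs_of_nonneg (Gneum_nonneg t r _)] using
      norm_integral_le_integral_norm (μ := volume.restrict (Ioi 0)) fun r' => Gneum t r r' * u.2 r'
  calc |(heat t u).2 r|
      ≤ |u.1 * Gneum t r 0| + |∫ r' in Ioi 0, Gneum t r r' * u.2 r'| := abs_add_le _ _
    _ ≤ |u.1| * Gneum t r 0 + ∫ r' in Ioi 0, Gneum t r r' * |u.2 r'| := by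
      rw [abs_mul, abs_of_nonneg (Gneum_nonneg t r 0)]
      gcongr

lemma dist1_heat_le (ht : 0 < t) (hu : IntegrableOn u.2 (Ioi 0))
    (hv : IntegrableOn v.2 (Ioi 0)) : dist1 (heat t u) (heat t v) ≤ dist1 u v := by
  have hdiff : IntegrableOn (fun r => |u.2 r - v.2 r|) (Ioi 0) := (hu.sub hv).abs
  calc dist1 (heat t u) (heat t v) = ∫ r in Ioi 0, |(heat t u).2 r - (heat t v).2 r| := by
        simp [dist1, heat]
    _ ≤ ∫ r in Ioi 0, (heat t (|u.1 - v.1|, fun r => |u.2 r - v.2 r|)).2 r :=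
        integral_mono ((integrableOn_heat ht hu).sub (integrableOn_heat ht hv)).abs
          (integrableOn_heat ht hdiff) fun r => by
            rw [heat_density_sub ht hu hv r]
            exact abs_heat_density_le r
    _ = dist1 u v := integral_heat ht hdiff

end Heat

section Tail

variable {f g : ℝ → ℝ} {a b : ℝ}

lemma Ioi_inter_Icc_of_le {c : ℝ} (hca : c ≤ a) : Ioi a ∩ Icc c b = Ioc a b := by
  ext x
  simp only [mem_inter_iff, mem_Ioi, mem_Icc, mem_Ioc]
  exact ⟨fun h => ⟨h.1, h.2.2⟩, fun h => ⟨h.1, hca.trans h.1.le, h.2⟩⟩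

lemma setIntegral_Ioi_eq_Ioc_add_Ioi (hab : a ≤ b) (hf : IntegrableOn f (Ioi a)) :
    ∫ x in Ioi a, f x = (∫ x in Ioc a b, f x) + ∫ x in Ioi b, f x := by
  rw [← intervalIntegral.integral_of_le hab]
  exact (intervalIntegral.integral_interval_add_Ioi hf (hf.mono_set (Ioi_subset_Ioi hab))).symm

lemma tendsto_setIntegral_Ioi_atTop (hf : IntegrableOn f (Ioi a)) :
    Tendsto (fun r => ∫ x in Ioi r, f x) atTop (𝓝 0) := by
  have h := tendsto_setIntegral_of_antitone (fun r => measurableSet_Ioi)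
    (fun _ _ h => Ioi_subset_Ioi h) ⟨a, hf⟩ (μ := volume) (f := f)
  have hempty : ⋂ r : ℝ, Ioi r = ∅ :=
    eq_empty_of_forall_notMem fun x hx => lt_irrefl x (mem_iInter.1 hx x)
  rwa [hempty, Measure.restrict_empty, integral_zero_measure] at h

/-- The mass of `g` on `(a, b]` is the difference of the tails of `g` and `f` beyond `a`. -/
lemma integral_Ioc_le_integral_abs_sub (hab : a ≤ b) (hf : IntegrableOn f (Ioi a))
    (hg : IntegrableOn g (Ioi a)) (htail : ∫ x in Ioi a, f x = ∫ x in Ioi b, g x) :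
    ∫ x in Ioc a b, g x ≤ ∫ x in Ioi a, |f x - g x| :=
  calc ∫ x in Ioc a b, g x = (∫ x in Ioi a, g x) - ∫ x in Ioi a, f x := by
        rw [htail, setIntegral_Ioi_eq_Ioc_add_Ioi hab hg, add_sub_cancel_right]
    _ = ∫ x in Ioi a, (g x - f x) := (integral_sub hg hf).symm
    _ ≤ ∫ x in Ioi a, |f x - g x| :=
        integral_mono (hg.sub hf) (hf.sub hg).abs fun x => abs_sub_comm (f x) (g x) ▸ le_abs_self _

lemma integral_abs_indicator_sub_indicator (ha : 0 ≤ a) (hab : a ≤ b)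
    (hf : IntegrableOn f (Ioi 0)) (hg : IntegrableOn g (Ioi 0)) (hg0 : ∀ x, 0 ≤ g x) :
    ∫ x in Ioi 0, |(Icc 0 a).indicator f x - (Icc 0 b).indicator g x|
      = (∫ x in Ioc 0 a, |f x - g x|) + ∫ x in Ioc a b, g x := by
  have hint : IntegrableOn (fun x => |(Icc 0 a).indicator f x - (Icc 0 b).indicator g x|) (Ioi 0) :=
    ((hf.indicator measurableSet_Icc).sub (hg.indicator measurableSet_Icc)).abs
  rw [setIntegral_Ioi_eq_Ioc_add_Ioi ha hint]
  congr 1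
  · refine setIntegral_congr_fun measurableSet_Ioc fun x hx => ?_
    rw [indicator_of_mem (show x ∈ Icc 0 a from ⟨hx.1.le, hx.2⟩),
      indicator_of_mem (show x ∈ Icc 0 b from ⟨hx.1.le, hx.2.trans hab⟩)]
  · have hcut : ∀ x ∈ Ioi a, |(Icc 0 a).indicator f x - (Icc 0 b).indicator g x|
        = (Icc 0 b).indicator g x := fun x hx => by
      rw [indicator_of_notMem (fun h => not_le.2 hx h.2), zero_sub, abs_neg,
        abs_of_nonneg (indicator_nonneg (fun y _ => hg0 y) x)]
    rw [setIntegral_congr_fun measurableSet_Ioi hcut, setIntegral_indicator measurableSet_Icc,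
      Ioi_inter_Icc_of_le ha]

end Tail

section Cut

variable {j δ : ℝ} {u v : UEl}

/-- The cut point exists: the tail `r ↦ ∫_r^∞ ρ_u` is continuous, exceeds `jδ` at `0` and tends
to `0`. The atom makes `F(0; u) > jδ`, so `0` is not in the level set and only the density tail
matters. -/
lemma Rdelta_spec (hjδ : 0 < j * δ) (hu : IsNonnegL1 u) (hm : j * δ < ∫ r in Ioi 0, u.2 r) :
    0 ≤ Rdelta j δ u ∧ ∫ x in Ioi (Rdelta j δ u), u.2 x = j * δ := by
  set T : ℝ → ℝ := fun r => ∫ x in Ioi r, u.2 x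
  have hT : ContinuousOn T (Ici 0) := IntegrableOn.continuousOn_Ici_primitive_Ioi hu.integrableOn
  have hlevel : {r : ℝ | 0 ≤ r ∧ tailF u r = j * δ} = Ici 0 ∩ T ⁻¹' {j * δ} := by
    ext r
    rcases eq_or_ne r 0 with rfl | hr
    · simp only [tailF, ↓reduceIte, mem_ofPred_eq, mem_inter_iff, mem_Ici, mem_preimage,
        mem_singleton_iff, T]
      constructor <;> rintro ⟨-, h⟩ <;> linarith [hu.atom_nonneg]
    · simp [tailF, if_neg hr, T]
  obtain ⟨b, hTb, hb⟩ := ((tendsto_setIntegral_Ioi_atTop hu.integrableOn).eventually_lt_const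
    hjδ |>.and (eventually_ge_atTop 0)).exists
  obtain ⟨r, hr, hTr⟩ := intermediate_value_Icc' hb (hT.mono Icc_subset_Ici_self) ⟨hTb.le, hm.le⟩
  have hclosed : IsClosed (Ici 0 ∩ T ⁻¹' {j * δ}) :=
    hT.preimage_isClosed_of_isClosed isClosed_Ici isClosed_singleton
  rw [Rdelta, hlevel]
  exact hclosed.csInf_mem ⟨r, hr.1, hTr⟩ ⟨0, fun x hx => hx.1⟩

lemma IsNonnegL1.cutPaste (hjδ : 0 ≤ j * δ) (hu : IsNonnegL1 u) : IsNonnegL1 (cutPaste j δ u) where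
  atom_nonneg := hjδ
  density_nonneg := indicator_nonneg fun x _ => hu.density_nonneg x
  integrableOn := hu.integrableOn.indicator measurableSet_Icc

lemma totalMass_cutPaste (hjδ : 0 < j * δ) (hu : IsNonnegL1 u)
    (hm : j * δ < ∫ r in Ioi 0, u.2 r) :
    totalMass (cutPaste j δ u) = ∫ r in Ioi 0, u.2 r := by
  obtain ⟨hR, htail⟩ := Rdelta_spec hjδ hu hm
  rw [totalMass, cutPaste, setIntegral_indicator measurableSet_Icc, Ioi_inter_Icc_of_le le_rfl,
    setIntegral_Ioi_eq_Ioc_add_Ioi hR hu.integrableOn, htail, add_comm]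

lemma dist1_cutPaste_le_of_Rdelta_le (hjδ : 0 < j * δ) (hu : IsNonnegL1 u) (hv : IsNonnegL1 v)
    (hmu : j * δ < ∫ r in Ioi 0, u.2 r) (hmv : j * δ < ∫ r in Ioi 0, v.2 r)
    (hR : Rdelta j δ u ≤ Rdelta j δ v) :
    dist1 (cutPaste j δ u) (cutPaste j δ v) ≤ dist1 u v := by
  obtain ⟨hRu, htailu⟩ := Rdelta_spec hjδ hu hmu
  obtain ⟨-, htailv⟩ := Rdelta_spec hjδ hv hmv
  have hdiff : IntegrableOn (fun x => |u.2 x - v.2 x|) (Ioi 0) :=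
    (hu.integrableOn.sub hv.integrableOn).abs
  calc dist1 (cutPaste j δ u) (cutPaste j δ v)
      = (∫ x in Ioc 0 (Rdelta j δ u), |u.2 x - v.2 x|)
          + ∫ x in Ioc (Rdelta j δ u) (Rdelta j δ v), v.2 x := by
        rw [← integral_abs_indicator_sub_indicator hRu hR hu.integrableOn hv.integrableOn
          hv.density_nonneg]
        simp [dist1, cutPaste]
    _ ≤ (∫ x in Ioc 0 (Rdelta j δ u), |u.2 x - v.2 x|)
          + ∫ x in Ioi (Rdelta j δ u), |u.2 x - v.2 x| :=
        add_le_add_right (integral_Ioc_le_integral_abs_sub hR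
          (hu.integrableOn.mono_set (Ioi_subset_Ioi hRu))
          (hv.integrableOn.mono_set (Ioi_subset_Ioi hRu)) (htailu.trans htailv.symm)) _
    _ = ∫ x in Ioi 0, |u.2 x - v.2 x| := (setIntegral_Ioi_eq_Ioc_add_Ioi hRu hdiff).symm
    _ ≤ dist1 u v := le_add_of_nonneg_left (abs_nonneg _)

lemma dist1_cutPaste_le (hjδ : 0 < j * δ) (hu : IsNonnegL1 u) (hv : IsNonnegL1 v)
    (hmu : j * δ < ∫ r in Ioi 0, u.2 r) (hmv : j * δ < ∫ r in Ioi 0, v.2 r) :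
    dist1 (cutPaste j δ u) (cutPaste j δ v) ≤ dist1 u v := by
  rcases le_total (Rdelta j δ u) (Rdelta j δ v) with h | h
  · exact dist1_cutPaste_le_of_Rdelta_le hjδ hu hv hmu hmv h
  · rw [dist1_comm, dist1_comm u]
    exact dist1_cutPaste_le_of_Rdelta_le hjδ hv hu hmv hmu h

end Cut

section Barriers

variable {j δ : ℝ} {u v : UEl}

lemma isNonnegL1_Sminus_and_lt_totalMass (hjδ : 0 < j * δ) (hδ : 0 < δ) (hu : memUdelta j δ u)
    (k : ℕ) :
    IsNonnegL1 (Sminus j δ u k) ∧ j * δ < totalMass (Sminus j δ u k) := by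
  induction k with
  | zero => exact ⟨hu.1.isNonnegL1, hu.2.trans_le (le_add_of_nonneg_left hu.1.1)⟩
  | succ k ih =>
    have hheat := ih.1.heat hδ
    have hm : j * δ < ∫ r in Ioi 0, (heat δ (Sminus j δ u k)).2 r := by
      rw [integral_heat hδ ih.1.integrableOn]
      exact ih.2
    exact ⟨hheat.cutPaste hjδ.le, (totalMass_cutPaste hjδ hheat hm).symm ▸ hm⟩

lemma isNonnegL1_Splus_and_lt_integral (hjδ : 0 < j * δ) (hδ : 0 < δ) (hu : memUdelta j δ u)
    (k : ℕ) :
    IsNonnegL1 (Splus j δ u k) ∧ j * δ < ∫ r in Ioi 0, (Splus j δ u k).2 r := by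
  induction k with
  | zero => exact ⟨hu.1.isNonnegL1, hu.2⟩
  | succ k ih =>
    have hcut := ih.1.cutPaste hjδ.le
    refine ⟨hcut.heat hδ, ?_⟩
    rw [Splus, integral_heat hδ hcut.integrableOn, totalMass_cutPaste hjδ ih.1 ih.2]
    exact ih.2

lemma dist1_Sminus_succ_le (hjδ : 0 < j * δ) (hδ : 0 < δ) (hu : memUdelta j δ u)
    (hv : memUdelta j δ v) (k : ℕ) :
    dist1 (Sminus j δ u (k + 1)) (Sminus j δ v (k + 1))
      ≤ dist1 (Sminus j δ u k) (Sminus j δ v k) := by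
  obtain ⟨hSu, hmu⟩ := isNonnegL1_Sminus_and_lt_totalMass hjδ hδ hu k
  obtain ⟨hSv, hmv⟩ := isNonnegL1_Sminus_and_lt_totalMass hjδ hδ hv k
  rw [← integral_heat hδ hSu.integrableOn] at hmu
  rw [← integral_heat hδ hSv.integrableOn] at hmv
  exact (dist1_cutPaste_le hjδ (hSu.heat hδ) (hSv.heat hδ) hmu hmv).trans
    (dist1_heat_le hδ hSu.integrableOn hSv.integrableOn)

lemma dist1_Splus_succ_le (hjδ : 0 < j * δ) (hδ : 0 < δ) (hu : memUdelta j δ u)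
    (hv : memUdelta j δ v) (k : ℕ) :
    dist1 (Splus j δ u (k + 1)) (Splus j δ v (k + 1))
      ≤ dist1 (Splus j δ u k) (Splus j δ v k) := by
  obtain ⟨hPu, hmu⟩ := isNonnegL1_Splus_and_lt_integral hjδ hδ hu k
  obtain ⟨hPv, hmv⟩ := isNonnegL1_Splus_and_lt_integral hjδ hδ hv k
  exact (dist1_heat_le hδ (hPu.cutPaste hjδ.le).integrableOn
    (hPv.cutPaste hjδ.le).integrableOn).trans (dist1_cutPaste_le hjδ hPu hPv hmu hmv)

end Barriers

/-- the barrier maps are contractions in total variation. -/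
theorem barriers_contraction (j δ : ℝ) (hj : 0 < j) (hδ : 0 < δ)
    (u v : UEl) (hu : memUdelta j δ u) (hv : memUdelta j δ v) :
    ∀ k : ℕ,
      dist1 (Sminus j δ u k) (Sminus j δ v k) ≤ dist1 u v ∧
      dist1 (Splus j δ u k) (Splus j δ v k) ≤ dist1 u v := by
  have hjδ : 0 < j * δ := mul_pos hj hδ
  intro k
  induction k with
  | zero => exact ⟨le_rfl, le_rfl⟩
  | succ k ih =>
    exact ⟨(dist1_Sminus_succ_le hjδ hδ hu hv k).trans ih.1,
      (dist1_Splus_succ_le hjδ hδ hu hv k).trans ih.2⟩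
end

section
/- Let u, v ∈ L^∞(ℝ₊,ℝ₊) ∩ L¹(ℝ₊,ℝ₊) with u ≤ v and equal total masses F(0; u) = F(0; v), and let f(r) := sup{r' ≥ 0 : ∫₀^{r'} v(z) dz = ∫₀^r u(z) dz}. Then for every bounded measurable function φ ∈ L^∞(ℝ₊,ℝ), ∫₀^∞ v(r) φ(r) dr = ∫₀^∞ u(r) φ(f(r)) dr. -/
open MeasureTheory Set Filter

/-! Let `μ = u dr` and `ν = v dr` on `ℝ₊`, with distribution functions `U` and `V`. The level
sets of the continuous function `V` are closed, so the supremum defining `f r` is attained: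
`V (f r) = U r`, and `f` is monotone. Thus `f r ≤ a` forces `U r ≤ V a`, while `U r < V a`
forces `f r < a`. As `U` is continuous, it is uniformly distributed under `μ`: both
`{U ≤ c}` and `{U < c}` have `μ`-mass `c`. Hence `μ {f ≤ a} = V a = ν (-∞, a]`, i.e.
`f` pushes `μ` forward to `ν`, which is the change of variables. -/

open Topology

namespace MeasureTheory.Measure

variable {μ ν : Measure ℝ}

/-- Unlike `ProbabilityTheory.cdf`, defined for every measure, not only probability measures. -/
noncomputable def distFun (μ : Measure ℝ) (x : ℝ) : ℝ := μ.real (Iic x)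

lemma monotone_distFun [IsFiniteMeasure μ] : Monotone μ.distFun :=
  fun _ _ h => measureReal_mono (Iic_subset_Iic.2 h)

lemma tendsto_distFun_atBot [IsFiniteMeasure μ] : Tendsto μ.distFun atBot (𝓝 0) := by
  have h := tendsto_measure_iInter_atBot (μ := μ) (fun x => measurableSet_Iic.nullMeasurableSet)
    monotone_Iic ⟨0, measure_ne_top μ _⟩
  rw [iInter_Iic_eq_empty_iff.2 (by simp), measure_empty] at h
  exact (ENNReal.tendsto_toReal ENNReal.zero_ne_top).comp h

lemma tendsto_distFun_atTop [IsFiniteMeasure μ] : Tendsto μ.distFun atTop (𝓝 (μ.real univ)) :=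
  (ENNReal.tendsto_toReal (measure_ne_top μ univ)).comp (tendsto_measure_Iic_atTop μ)

lemma continuous_distFun [IsFiniteMeasure μ] [NullSingletonClass μ] : Continuous μ.distFun := by
  have h : ∀ x, μ.distFun x = μ.distFun 0 + ∫ _ in 0..x, (1 : ℝ) ∂μ := by
    intro x
    rw [intervalIntegral.integral_const', smul_eq_mul, mul_one, distFun, distFun]
    rcases le_total 0 x with hx | hx <;>
    · rw [← Iic_union_Ioc_eq_Iic hx, measureReal_union (Iic_disjoint_Ioc le_rfl)
        measurableSet_Ioc, Ioc_eq_empty_of_le hx, measureReal_empty]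
      ring
  rw [funext h]
  exact continuous_const.add ((integrable_const 1).continuous_primitive 0)

lemma exists_distFun_eq [IsFiniteMeasure μ] [NullSingletonClass μ] {c : ℝ} (h0 : 0 < c)
    (hc : c < μ.real univ) : ∃ x, μ.distFun x = c :=
  mem_range_of_exists_le_of_exists_ge continuous_distFun
    (tendsto_distFun_atBot.eventually (ge_mem_nhds h0)).exists
    (tendsto_distFun_atTop.eventually (le_mem_nhds hc)).exists

lemma measureReal_setOf_distFun_le [IsFiniteMeasure μ] [NullSingletonClass μ] {c : ℝ}
    (hc : 0 ≤ c) : μ.real {x | μ.distFun x ≤ c} ≤ c := by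
  refine le_of_forall_gt_imp_ge_of_dense fun c' hc' => ?_
  rcases le_or_gt (μ.real univ) c' with hM | hM
  · exact (measureReal_mono (subset_univ _)).trans hM
  obtain ⟨r, hr⟩ := exists_distFun_eq (hc.trans_lt hc') hM
  calc μ.real {x | μ.distFun x ≤ c} ≤ μ.real (Iic r) := by
        refine measureReal_mono fun x (hx : μ.distFun x ≤ c) => ?_
        exact (monotone_distFun.reflect_lt (hx.trans_lt (hr ▸ hc'))).le
    _ = c' := hr

lemma le_measureReal_setOf_distFun_lt [IsFiniteMeasure μ] [NullSingletonClass μ] {c : ℝ}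
    (hc : c ≤ μ.real univ) : c ≤ μ.real {x | μ.distFun x < c} := by
  refine le_of_forall_lt_imp_le_of_dense fun c' hc' => ?_
  rcases le_or_gt c' 0 with h0 | h0
  · exact h0.trans measureReal_nonneg
  obtain ⟨r, hr⟩ := exists_distFun_eq h0 (hc'.trans_le hc)
  calc c' = μ.real (Iic r) := hr.symm
    _ ≤ μ.real {x | μ.distFun x < c} := by
        refine measureReal_mono fun x (hx : x ≤ r) => ?_
        show μ.distFun x < c
        linarith [monotone_distFun (μ := μ) hx]

theorem map_eq_of_distFun_comp [IsFiniteMeasure μ] [NullSingletonClass μ] [IsFiniteMeasure ν]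
    (hmass : μ.real univ = ν.real univ) {f : ℝ → ℝ} (hf : AEMeasurable f μ)
    (hcomp : ∀ᵐ x ∂μ, ν.distFun (f x) = μ.distFun x) : μ.map f = ν := by
  refine ext_of_Iic _ _ fun a => ?_
  have hle : (μ.map f).real (Iic a) ≤ ν.distFun a := calc
    (μ.map f).real (Iic a) = μ.real (f ⁻¹' Iic a) :=
      map_measureReal_apply_of_aemeasurable hf measurableSet_Iic
    _ ≤ μ.real {x | μ.distFun x ≤ ν.distFun a} := by
      refine ENNReal.toReal_mono (measure_ne_top _ _) (measure_mono_ae ?_)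
      filter_upwards [hcomp] with x hx (hxa : f x ≤ a)
      exact (hx.symm.trans_le (monotone_distFun hxa) : μ.distFun x ≤ ν.distFun a)
    _ ≤ ν.distFun a := measureReal_setOf_distFun_le measureReal_nonneg
  have hge : ν.distFun a ≤ (μ.map f).real (Iio a) := calc
    ν.distFun a ≤ μ.real {x | μ.distFun x < ν.distFun a} :=
      le_measureReal_setOf_distFun_lt (hmass ▸ measureReal_mono (subset_univ _))
    _ ≤ μ.real (f ⁻¹' Iio a) := by
      refine ENNReal.toReal_mono (measure_ne_top _ _) (measure_mono_ae ?_)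
      filter_upwards [hcomp] with x hx (hxa : μ.distFun x < ν.distFun a)
      exact monotone_distFun.reflect_lt (hx ▸ hxa)
    _ = (μ.map f).real (Iio a) :=
      (map_measureReal_apply_of_aemeasurable hf measurableSet_Iio).symm
  rw [← ofReal_measureReal, ← ofReal_measureReal,
    le_antisymm hle (hge.trans (measureReal_mono Iio_subset_Iic_self))]
  rfl

end MeasureTheory.Measure

noncomputable def densityMeasure (u : ℝ → ℝ) : Measure ℝ :=
  (volume.restrict (Ioi 0)).withDensity fun x => ENNReal.ofReal (u x)

section densityMeasure

variable {u : ℝ → ℝ}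

instance : NullSingletonClass (densityMeasure u) := by
  unfold densityMeasure; infer_instance

lemma isFiniteMeasure_densityMeasure (hu : IntegrableOn u (Ioi 0)) :
    IsFiniteMeasure (densityMeasure u) :=
  isFiniteMeasure_withDensity_ofReal hu.2

lemma ae_pos_densityMeasure : ∀ᵐ x ∂densityMeasure u, 0 < x :=
  withDensity_absolutelyContinuous _ _ |>.ae_le (ae_restrict_mem measurableSet_Ioi)

lemma densityMeasure_real_apply (hu : IntegrableOn u (Ioi 0)) (hu0 : ∀ x, 0 ≤ u x)
    {s : Set ℝ} (hs : MeasurableSet s) :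
    (densityMeasure u).real s = ∫ x in s ∩ Ioi 0, u x := by
  rw [measureReal_def, densityMeasure, withDensity_apply _ hs, Measure.restrict_restrict hs,
    integral_eq_lintegral_of_nonneg_ae (ae_of_all _ hu0)
      (hu.mono_set inter_subset_right).aestronglyMeasurable]

lemma distFun_densityMeasure (hu : IntegrableOn u (Ioi 0)) (hu0 : ∀ x, 0 ≤ u x) (x : ℝ) :
    (densityMeasure u).distFun x = ∫ z in Ioc 0 x, u z := by
  rw [Measure.distFun, densityMeasure_real_apply hu hu0 measurableSet_Iic, Iic_inter_Ioi]

lemma densityMeasure_real_univ (hu : IntegrableOn u (Ioi 0)) (hu0 : ∀ x, 0 ≤ u x) :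
    (densityMeasure u).real univ = ∫ x in Ioi 0, u x := by
  rw [densityMeasure_real_apply hu hu0 MeasurableSet.univ, univ_inter]

lemma integral_densityMeasure (hu : IntegrableOn u (Ioi 0)) (hu0 : ∀ x, 0 ≤ u x)
    (φ : ℝ → ℝ) : ∫ x, φ x ∂densityMeasure u = ∫ x in Ioi 0, u x * φ x := by
  rw [densityMeasure, integral_withDensity_eq_integral_toReal_smul₀
    (f := fun x => ENNReal.ofReal (u x)) hu.aemeasurable.ennreal_ofReal
    (ae_of_all _ fun _ => ENNReal.ofReal_lt_top)]
  simp only [ENNReal.toReal_ofReal (hu0 _), smul_eq_mul]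

lemma aemeasurable_densityMeasure_of_monotoneOn {f : ℝ → ℝ} (hf : MonotoneOn f (Ioi 0)) :
    AEMeasurable f (densityMeasure u) :=
  (aemeasurable_restrict_of_monotoneOn measurableSet_Ioi hf).mono_ac
    (withDensity_absolutelyContinuous _ _)

end densityMeasure

section LevelSetSup

variable {U V f : ℝ → ℝ}

lemma mem_of_isLUB_setOf_eq (hV : Continuous V) {c a : ℝ}
    (h : IsLUB {r | 0 ≤ r ∧ V r = c} a) : 0 ≤ a ∧ V a = c :=
  h.mem_of_isClosed h.nonempty (isClosed_Ici.inter (isClosed_eq hV continuous_const))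

lemma monotoneOn_of_isLUB_setOf_eq (hU : Monotone U) (hV : Monotone V) (hVc : Continuous V)
    (hf : ∀ r, 0 ≤ r → IsLUB {r' | 0 ≤ r' ∧ V r' = U r} (f r)) :
    MonotoneOn f (Ici 0) := by
  intro r₁ h₁ r₂ h₂ h₁₂
  obtain ⟨hf₁_nonneg, hf₁⟩ := mem_of_isLUB_setOf_eq hVc (hf r₁ h₁)
  obtain ⟨-, hf₂⟩ := mem_of_isLUB_setOf_eq hVc (hf r₂ h₂)
  by_contra! hlt
  have hlevel : V (f r₁) = U r₂ := le_antisymm (hf₁ ▸ hU h₁₂) (hf₂ ▸ hV hlt.le)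
  exact hlt.not_ge ((hf r₂ h₂).1 ⟨hf₁_nonneg, hlevel⟩)

end LevelSetSup

open Measure

theorem mass_displacement_change_of_variables_general
    (u v : ℝ → ℝ) (hu : goodFn u) (hv : goodFn v)
    (hmass : (∫ x in Set.Ioi (0:ℝ), u x) = ∫ x in Set.Ioi (0:ℝ), v x)
    (f : ℝ → ℝ)
    (hf : ∀ r : ℝ, 0 ≤ r →
      IsLUB {r' : ℝ | 0 ≤ r' ∧
        (∫ z in Set.Ioc (0:ℝ) r', v z) = ∫ z in Set.Ioc (0:ℝ) r, u z} (f r)) :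
    ∀ φ : ℝ → ℝ, Measurable φ → (∃ M : ℝ, ∀ r, |φ r| ≤ M) →
      (∫ r in Set.Ioi (0:ℝ), v r * φ r) = ∫ r in Set.Ioi (0:ℝ), u r * φ (f r) := by
  intro φ hφ _
  obtain ⟨hu0, hu_int, -⟩ := hu
  obtain ⟨hv0, hv_int, -⟩ := hv
  have := isFiniteMeasure_densityMeasure hu_int
  have := isFiniteMeasure_densityMeasure hv_int
  have hlub : ∀ r, 0 ≤ r → IsLUB {r' | 0 ≤ r' ∧
      (densityMeasure v).distFun r' = (densityMeasure u).distFun r} (f r) := by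
    simpa only [distFun_densityMeasure hu_int hu0, distFun_densityMeasure hv_int hv0] using hf
  have hf_meas : AEMeasurable f (densityMeasure u) :=
    aemeasurable_densityMeasure_of_monotoneOn <| (monotoneOn_of_isLUB_setOf_eq monotone_distFun
      monotone_distFun continuous_distFun hlub).mono Ioi_subset_Ici_self
  have hmap : (densityMeasure u).map f = densityMeasure v := by
    refine map_eq_of_distFun_comp ?_ hf_meas ?_
    · rwa [densityMeasure_real_univ hu_int hu0, densityMeasure_real_univ hv_int hv0]
    · filter_upwards [ae_pos_densityMeasure] with x hx
      exact (mem_of_isLUB_setOf_eq continuous_distFun (hlub x hx.le)).2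
  calc (∫ r in Ioi 0, v r * φ r) = ∫ r, φ r ∂densityMeasure v :=
        (integral_densityMeasure hv_int hv0 φ).symm
    _ = ∫ r, φ (f r) ∂densityMeasure u := by
        rw [← hmap, integral_map hf_meas hφ.aestronglyMeasurable]
    _ = ∫ r in Ioi 0, u r * φ (f r) := integral_densityMeasure hu_int hu0 _

/-- change of variables by the mass-displacement map:
`∫ v φ = ∫ u (φ ∘ f)` for every bounded measurable `φ`. -/
theorem mass_displacement_change_of_variables
    (u v : ℝ → ℝ) (hu : goodFn u) (hv : goodFn v)
    (hle : fnLe u v)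
    (hmass : (∫ x in Set.Ioi (0:ℝ), u x) = ∫ x in Set.Ioi (0:ℝ), v x)
    (f : ℝ → ℝ)
    (hf : ∀ r : ℝ, 0 ≤ r →
      IsLUB {r' : ℝ | 0 ≤ r' ∧
        (∫ z in Set.Ioc (0:ℝ) r', v z) = ∫ z in Set.Ioc (0:ℝ) r, u z} (f r)) :
    ∀ φ : ℝ → ℝ, Measurable φ → (∃ M : ℝ, ∀ r, |φ r| ≤ M) →
      (∫ r in Set.Ioi (0:ℝ), v r * φ r) = ∫ r in Set.Ioi (0:ℝ), u r * φ (f r) :=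
  mass_displacement_change_of_variables_general u v hu hv hmass f hf
end

section
/- Left cut lemma: let u, v ∈ L^∞(ℝ₊,ℝ₊) ∩ L¹(ℝ₊,ℝ₊) with u ≤ v and m := F(0; v) − F(0; u) > 0, and let R̃ ≥ 0 satisfy ∫₀^{R̃} v(z) dz = m. Then, setting ṽ := v 𝟙_{[R̃,∞)}, one has u ≤ ṽ and F(0; u) = F(0; ṽ). -/
open MeasureTheory Set Filter

theorem setIntegral_Ioi_indicator_Ici (μ : Measure ℝ) [NullSingletonClass μ]
    (f : ℝ → ℝ) (r R : ℝ) :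
    ∫ x in Ioi r, (Ici R).indicator f x ∂μ = ∫ x in Ioi (max r R), f x ∂μ := by
  rw [setIntegral_indicator measurableSet_Ici, ← Ioi_inter_Ioi]
  exact setIntegral_congr_set (ae_eq_set_inter .rfl Ioi_ae_eq_Ici.symm)

theorem setIntegral_Ioi_le_of_le {μ : Measure ℝ} {f : ℝ → ℝ} {r s : ℝ}
    (hf : IntegrableOn f (Ioi r) μ) (hf_nonneg : ∀ x, 0 ≤ f x) (hrs : r ≤ s) :
    ∫ x in Ioi s, f x ∂μ ≤ ∫ x in Ioi r, f x ∂μ :=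
  setIntegral_mono_set hf (.of_forall hf_nonneg) (Ioi_subset_Ioi hrs).eventuallyLE

theorem left_cut_general (u v : ℝ → ℝ) (hu : goodFn u) (hv : goodFn v)
    (hle : fnLe u v) (m : ℝ)
    (hmdef : m = (∫ x in Set.Ioi (0:ℝ), v x) - ∫ x in Set.Ioi (0:ℝ), u x)
    (R : ℝ) (hR : 0 ≤ R)
    (hRm : (∫ z in Set.Ioc (0:ℝ) R, v z) = m) :
    fnLe u (Set.indicator (Set.Ici R) v) ∧
      (∫ x in Set.Ioi (0:ℝ), u x) =
        ∫ x in Set.Ioi (0:ℝ), Set.indicator (Set.Ici R) v x := by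
  obtain ⟨hu_nonneg, hu_int, -⟩ := hu
  have hmass : ∫ x in Ioi (0:ℝ), u x = ∫ x in Ioi R, v x := by
    have hsplit := intervalIntegral.integral_Ioi_sub_Ioi hv.2.1 hR
    rw [intervalIntegral.integral_of_le hR, hRm] at hsplit
    linarith
  refine ⟨fun r hr => ?_, ?_⟩
  · rw [setIntegral_Ioi_indicator_Ici]
    rcases le_total R r with hRr | hrR
    · rw [max_eq_left hRr]
      exact hle r hr
    · rw [max_eq_right hrR, ← hmass]
      exact setIntegral_Ioi_le_of_le hu_int hu_nonneg hr
  · rw [setIntegral_Ioi_indicator_Ici, max_eq_right hR, hmass]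

/-- left cut: cutting the mass excess `m = F(0;v) − F(0;u)` from the
left of `v` gives `ṽ = v 𝟙_{[R̃,∞)}` with `u ≤ ṽ` and equal masses. -/
theorem left_cut (u v : ℝ → ℝ) (hu : goodFn u) (hv : goodFn v)
    (hle : fnLe u v) (m : ℝ)
    (hmdef : m = (∫ x in Set.Ioi (0:ℝ), v x) - ∫ x in Set.Ioi (0:ℝ), u x)
    (hm : 0 < m) (R : ℝ) (hR : 0 ≤ R)
    (hRm : (∫ z in Set.Ioc (0:ℝ) R, v z) = m) :
    fnLe u (Set.indicator (Set.Ici R) v) ∧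
      (∫ x in Set.Ioi (0:ℝ), u x) =
        ∫ x in Set.Ioi (0:ℝ), Set.indicator (Set.Ici R) v x :=
  left_cut_general u v hu hv hle m hmdef R hR hRm
end

section
/- Right cut lemma: let u = (c_u, ρ_u), v = (c_v, ρ_v) ∈ 𝓤 and m > 0 with m ≤ ∫₀^∞ ρ_u, and suppose u ≤ v modulo m. Then the truncation u* := (c_u, ρ_u 𝟙_{[0,R_m]}), where R_m := inf{r : F(r; u) = m}, satisfies u* ≤ v. -/
open MeasureTheory Set Filter

/-!
Truncating `ρ_u` at `R_m` removes the mass `∫_{R_m}^∞ ρ_u ≥ m` from every tail `F(r; u)` with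
`r ≤ R_m`, which pays for the slack `m` in `u ≤ v modulo m`; beyond `R_m` the truncated tail
vanishes. The bound `∫_{R_m}^∞ ρ_u ≥ m` holds because the tail integral is antitone and equals
(or, at `r = 0`, is at least) `m` at each point of the set whose infimum is `R_m`; when that set is
empty, `R_m = sInf ∅ = 0`.
-/

theorem setIntegral_Ioi_indicator_Icc_add {f : ℝ → ℝ} {a r R : ℝ} (har : a ≤ r) (hrR : r ≤ R)
    (hf : IntegrableOn f (Ioi r)) :
    (∫ x in Ioi r, (Icc a R).indicator f x) + ∫ x in Ioi R, f x = ∫ x in Ioi r, f x := by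
  have hIoc : Ioi r ∩ Icc a R = Ioc r R :=
    ext fun x => ⟨fun ⟨hrx, _, hxR⟩ => ⟨hrx, hxR⟩, fun ⟨hrx, hxR⟩ => ⟨hrx, har.trans hrx.le, hxR⟩⟩
  rw [setIntegral_indicator measurableSet_Icc, hIoc, ← intervalIntegral.integral_of_le hrR]
  exact intervalIntegral.integral_interval_add_Ioi hf (hf.mono_set (Ioi_subset_Ioi hrR))

theorem setIntegral_Ioi_indicator_Icc_of_le {f : ℝ → ℝ} {a r R : ℝ} (hRr : R ≤ r) :
    ∫ x in Ioi r, (Icc a R).indicator f x = 0 :=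
  setIntegral_eq_zero_of_forall_eq_zero fun _ hx =>
    indicator_of_notMem (fun hx' => (hRr.trans_lt hx).not_ge hx'.2) f

theorem tailF_nonneg {v : UEl} (hc : 0 ≤ v.1) (hρ : ∀ x, 0 ≤ v.2 x) (r : ℝ) :
    0 ≤ tailF v r :=
  add_nonneg (by split_ifs <;> simp [hc]) (setIntegral_nonneg measurableSet_Ioi fun x _ => hρ x)

theorem tailF_indicator_Icc_add (u : UEl) {r R : ℝ} (hr : 0 ≤ r) (hrR : r ≤ R)
    (hint : IntegrableOn u.2 (Ioi r)) :
    tailF (u.1, (Icc 0 R).indicator u.2) r + ∫ x in Ioi R, u.2 x = tailF u r := by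
  rw [tailF, tailF, add_assoc, setIntegral_Ioi_indicator_Icc_add hr hrR hint]

theorem tailF_indicator_Icc_of_lt (u : UEl) {r R : ℝ} (hR : 0 ≤ R) (hRr : R < r) :
    tailF (u.1, (Icc 0 R).indicator u.2) r = 0 := by
  simp [tailF, (hR.trans_lt hRr).ne', setIntegral_Ioi_indicator_Icc_of_le hRr.le]

theorem le_setIntegral_Ioi_sInf_tailF_eq {u : UEl} {m : ℝ} (hρ : ∀ x, 0 ≤ u.2 x)
    (hint : IntegrableOn u.2 (Ioi 0)) (hm : m ≤ ∫ x in Ioi 0, u.2 x) :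
    m ≤ ∫ x in Ioi (sInf {r : ℝ | 0 ≤ r ∧ tailF u r = m}), u.2 x := by
  set S := {r : ℝ | 0 ≤ r ∧ tailF u r = m}
  have hmass : ∀ s ∈ S, m ≤ ∫ x in Ioi s, u.2 x := by
    rintro s ⟨hs0, hs⟩
    rcases hs0.eq_or_lt with rfl | hs0
    · exact hm
    · simpa [tailF, hs0.ne'] using hs.ge
  rcases S.eq_empty_or_nonempty with hS | ⟨s, hs⟩
  · rwa [hS, Real.sInf_empty]
  · have hS0 : 0 ≤ sInf S := Real.sInf_nonneg fun x hx => hx.1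
    have hSs : sInf S ≤ s := csInf_le ⟨0, fun x hx => hx.1⟩ hs
    refine (hmass s hs).trans (setIntegral_mono_set ?_ (ae_of_all _ fun x => hρ x) ?_)
    · exact hint.mono_set (Ioi_subset_Ioi hS0)
    · exact (Ioi_subset_Ioi hSs).eventuallyLE

theorem right_cut_general (u v : UEl) (hu : memU u) (hv : memU v)
    (m : ℝ) (hm' : m ≤ ∫ r in Set.Ioi (0:ℝ), u.2 r)
    (hle : UleMod u v m) :
    Ule (u.1, Set.indicator
        (Set.Icc 0 (sInf {r : ℝ | 0 ≤ r ∧ tailF u r = m})) u.2) v := by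
  obtain ⟨-, hρ, hint, -⟩ := hu
  obtain ⟨hcv, hρv, -, -⟩ := hv
  set R := sInf {r : ℝ | 0 ≤ r ∧ tailF u r = m}
  have hR : 0 ≤ R := Real.sInf_nonneg fun x hx => hx.1
  have hmR : m ≤ ∫ x in Ioi R, u.2 x := le_setIntegral_Ioi_sInf_tailF_eq hρ hint hm'
  intro r hr
  rcases le_or_gt r R with hrR | hRr
  · have hcut := tailF_indicator_Icc_add u hr hrR (IntegrableOn.mono_set hint (Ioi_subset_Ioi hr))
    linarith [hle r hr]
  · rw [tailF_indicator_Icc_of_lt u hR hRr]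
    exact tailF_nonneg hcv hρv r

/-- right cut: if `u ≤ v` modulo `m` then the right truncation
`u* = (c_u, ρ_u 𝟙_{[0,R_m]})` with `R_m = inf{r : F(r;u) = m}` satisfies `u* ≤ v`. -/
theorem right_cut (u v : UEl) (hu : memU u) (hv : memU v)
    (m : ℝ) (hm : 0 < m) (hm' : m ≤ ∫ r in Set.Ioi (0:ℝ), u.2 r)
    (hle : UleMod u v m) :
    Ule (u.1, Set.indicator
        (Set.Icc 0 (sInf {r : ℝ | 0 ≤ r ∧ tailF u r = m})) u.2) v :=
  right_cut_general u v hu hv m hm' hle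
end

section
/- Let u, v ∈ 𝓤 and m > 0 with m ≤ ∫₀^∞ ρ_u, and suppose u ≤ v modulo m. Then for every t > 0, G_t^{neum} * u ≤ G_t^{neum} * v modulo m. -/
open MeasureTheory Set Filter

/-!
Let `g_t` be the centred Gaussian density of variance `t` and `A_t(r) = ∫_r^∞ g_t`. Integrating
the Neumann kernel in `r` and then integrating by parts in the source variable (both steps are
Fubini) gives, for every `r`,
  `F(r; G_t * u) = 2 A_t(r) F(0; u) + ∫_0^∞ (g_t(r - x) - g_t(r + x)) F(x; u) dx`.
For `r ≥ 0` the weight `2 A_t(r)` and the Dirichlet kernel `g_t(r - x) - g_t(r + x)` are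
nonnegative with total mass `1`, so `F(r; G_t * u)` is an average of the values of `F(·; u)`,
and an inequality `F(·; u) ≤ F(·; v) + m` survives the averaging.
-/

noncomputable section

namespace NeumannHeat

open ProbabilityTheory (gaussianPDFReal gaussianPDFReal_nonneg integrable_gaussianPDFReal
  integral_gaussianPDFReal_eq_one)

section TriangleFubini

variable {a : ℝ} {ρ k : ℝ → ℝ}

lemma integrable_indicator_lt_mul_prod (hρ : IntegrableOn ρ (Ioi a))
    (hk : IntegrableOn k (Ioi a)) :
    Integrable ({p : ℝ × ℝ | p.2 < p.1}.indicator fun p => ρ p.1 * k p.2)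
      ((volume.restrict (Ioi a)).prod (volume.restrict (Ioi a))) :=
  (hρ.mul_prod hk).indicator (measurableSet_lt measurable_snd measurable_fst)

lemma setIntegral_indicator_lt_mul_fst {s : ℝ} (hs : a < s) :
    ∫ x in Ioi a, {p : ℝ × ℝ | p.2 < p.1}.indicator (fun p => ρ p.1 * k p.2) (s, x)
      = ρ s * ∫ x in a..s, k x := by
  have hsec : ∀ x, {p : ℝ × ℝ | p.2 < p.1}.indicator (fun p => ρ p.1 * k p.2) (s, x)
      = (Iio s).indicator (fun x => ρ s * k x) x := fun x => by
    simp [indicator_apply]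
  simp_rw [hsec]
  rw [integral_indicator measurableSet_Iio, Measure.restrict_restrict measurableSet_Iio,
    inter_comm, Ioi_inter_Iio, integral_const_mul, ← integral_Ioc_eq_integral_Ioo,
    intervalIntegral.integral_of_le hs.le]

lemma setIntegral_indicator_lt_mul_snd {x : ℝ} (hx : a < x) :
    ∫ s in Ioi a, {p : ℝ × ℝ | p.2 < p.1}.indicator (fun p => ρ p.1 * k p.2) (s, x)
      = k x * ∫ s in Ioi x, ρ s := by
  have hsec : ∀ s, {p : ℝ × ℝ | p.2 < p.1}.indicator (fun p => ρ p.1 * k p.2) (s, x)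
      = (Ioi x).indicator (fun s => k x * ρ s) s := fun s => by
    simp [indicator_apply, mul_comm]
  simp_rw [hsec]
  rw [integral_indicator measurableSet_Ioi, Measure.restrict_restrict measurableSet_Ioi,
    Ioi_inter_Ioi, sup_eq_left.2 hx.le, integral_const_mul]

lemma integrableOn_mul_setIntegral_Ioi (hρ : IntegrableOn ρ (Ioi a))
    (hk : IntegrableOn k (Ioi a)) :
    IntegrableOn (fun x => k x * ∫ s in Ioi x, ρ s) (Ioi a) :=
  (integrable_indicator_lt_mul_prod hρ hk).integral_prod_right.congr <|
    (ae_restrict_mem measurableSet_Ioi).mono fun _ hx => setIntegral_indicator_lt_mul_snd hx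

lemma setIntegral_mul_intervalIntegral_eq (hρ : IntegrableOn ρ (Ioi a))
    (hk : IntegrableOn k (Ioi a)) :
    ∫ s in Ioi a, ρ s * ∫ x in a..s, k x = ∫ x in Ioi a, k x * ∫ s in Ioi x, ρ s := calc
  _ = ∫ s in Ioi a, ∫ x in Ioi a,
        {p : ℝ × ℝ | p.2 < p.1}.indicator (fun p => ρ p.1 * k p.2) (s, x) :=
    setIntegral_congr_fun measurableSet_Ioi fun _ hs => (setIntegral_indicator_lt_mul_fst hs).symm
  _ = ∫ x in Ioi a, ∫ s in Ioi a,
        {p : ℝ × ℝ | p.2 < p.1}.indicator (fun p => ρ p.1 * k p.2) (s, x) :=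
    integral_integral_swap (integrable_indicator_lt_mul_prod hρ hk)
  _ = _ := setIntegral_congr_fun measurableSet_Ioi fun _ hx => setIntegral_indicator_lt_mul_snd hx

end TriangleFubini

lemma mul_add_integral_mul_le_add {α : Type*} [MeasurableSpace α] {μ : Measure α}
    {a m f₀ g₀ : ℝ} {k f g : α → ℝ} (ha : 0 ≤ a) (hk : 0 ≤ᵐ[μ] k)
    (hmass : a + ∫ x, k x ∂μ = 1) (hk_int : Integrable k μ)
    (hf : Integrable (fun x => k x * f x) μ) (hg : Integrable (fun x => k x * g x) μ)
    (h₀ : f₀ ≤ g₀ + m) (hfg : ∀ᵐ x ∂μ, f x ≤ g x + m) :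
    a * f₀ + ∫ x, k x * f x ∂μ ≤ a * g₀ + ∫ x, k x * g x ∂μ + m := by
  have hint : ∫ x, k x * f x ∂μ ≤ ∫ x, k x * g x ∂μ + m * ∫ x, k x ∂μ := calc
    _ ≤ ∫ x, (k x * g x + m * k x) ∂μ :=
      integral_mono_ae hf (hg.add (hk_int.const_mul m)) <| by
        filter_upwards [hk, hfg] with x hkx hx
        linarith [mul_le_mul_of_nonneg_left hx (hkx : 0 ≤ k x)]
    _ = _ := by rw [integral_add hg (hk_int.const_mul m), integral_const_mul]
  linear_combination mul_le_mul_of_nonneg_left h₀ ha + hint + m * hmass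

def gauss (t x : ℝ) : ℝ := gaussianPDFReal 0 t.toNNReal x

def gaussTail (t r : ℝ) : ℝ := ∫ x in Ioi r, gauss t x

/-- The Dirichlet heat kernel on `ℝ₊`. -/
def Gdir (t r x : ℝ) : ℝ := gauss t (r - x) - gauss t (r + x)

variable {t : ℝ} {ρ : ℝ → ℝ}

lemma gauss_nonneg (t x : ℝ) : 0 ≤ gauss t x := gaussianPDFReal_nonneg _ _ _

lemma gauss_neg (t x : ℝ) : gauss t (-x) = gauss t x := by
  simp [gauss, gaussianPDFReal]

lemma integrable_gauss (t : ℝ) : Integrable (gauss t) := integrable_gaussianPDFReal _ _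

lemma integral_gauss (ht : 0 < t) : ∫ x, gauss t x = 1 :=
  integral_gaussianPDFReal_eq_one _ (by simpa using ht)

lemma setIntegral_Ioi_gauss_sub (t r s : ℝ) :
    ∫ x in Ioi r, gauss t (x - s) = gaussTail t (r - s) := by
  have := (measurePreserving_sub_right volume s).setIntegral_preimage_emb
    (measurableEmbedding_subRight s) (gauss t) (Ioi (r - s))
  rwa [preimage_sub_const_Ioi, sub_add_cancel] at this

lemma setIntegral_Ioi_gauss_add (t r s : ℝ) :
    ∫ x in Ioi r, gauss t (x + s) = gaussTail t (r + s) := by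
  simpa using setIntegral_Ioi_gauss_sub t r (-s)

lemma gaussTail_nonneg (t r : ℝ) : 0 ≤ gaussTail t r :=
  setIntegral_nonneg measurableSet_Ioi fun x _ => gauss_nonneg t x

lemma gaussTail_le_one (ht : 0 < t) (r : ℝ) : gaussTail t r ≤ 1 :=
  integral_gauss ht ▸ setIntegral_le_integral (integrable_gauss t)
    (Eventually.of_forall fun x => gauss_nonneg t x)

lemma antitone_gaussTail (t : ℝ) : Antitone (gaussTail t) := fun _ _ hrs =>
  setIntegral_mono_set (integrable_gauss t).integrableOn
    (Eventually.of_forall fun x => gauss_nonneg t x) (Ioi_subset_Ioi hrs).eventuallyLE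

lemma gaussTail_add_gaussTail_neg (ht : 0 < t) (r : ℝ) :
    gaussTail t r + gaussTail t (-r) = 1 := by
  have hneg : gaussTail t (-r) = ∫ x in Iic r, gauss t x := by
    simp only [gaussTail, ← integral_comp_neg_Iic, gauss_neg]
  rw [hneg, add_comm, gaussTail, intervalIntegral.integral_Iic_add_Ioi
    (integrable_gauss t).integrableOn (integrable_gauss t).integrableOn, integral_gauss ht]

lemma Gneum_eq (ht : 0 ≤ t) (x s : ℝ) : Gneum t x s = gauss t (x - s) + gauss t (x + s) := by
  simp only [Gneum, gauss, gaussianPDFReal, Real.coe_toNNReal t ht, sub_zero]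
  ring

lemma continuous_Gneum (t : ℝ) : Continuous fun p : ℝ × ℝ => Gneum t p.1 p.2 := by
  unfold Gneum; fun_prop

lemma Gneum_nonneg (t x s : ℝ) : 0 ≤ Gneum t x s := by
  unfold Gneum; positivity

lemma integrable_Gneum (ht : 0 ≤ t) (s : ℝ) : Integrable fun x => Gneum t x s := by
  simp_rw [Gneum_eq ht]
  exact ((integrable_gauss t).comp_sub_right s).add ((integrable_gauss t).comp_add_right s)

lemma setIntegral_Ioi_Gneum (ht : 0 ≤ t) (r s : ℝ) :
    ∫ x in Ioi r, Gneum t x s = gaussTail t (r - s) + gaussTail t (r + s) := by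
  simp_rw [Gneum_eq ht]
  rw [integral_add ((integrable_gauss t).comp_sub_right s).integrableOn
    ((integrable_gauss t).comp_add_right s).integrableOn, setIntegral_Ioi_gauss_sub,
    setIntegral_Ioi_gauss_add]

lemma Gdir_nonneg (t : ℝ) {r x : ℝ} (hr : 0 ≤ r) (hx : 0 ≤ x) : 0 ≤ Gdir t r x := by
  rw [Gdir, sub_nonneg, gauss, gauss, gaussianPDFReal, gaussianPDFReal]
  gcongr _ * Real.exp (-?_ / _)
  nlinarith

lemma integrable_Gdir (t r : ℝ) : Integrable (Gdir t r) :=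
  ((integrable_gauss t).comp_sub_left r).sub ((integrable_gauss t).comp_add_left r)

lemma setIntegral_Ioi_Gdir (ht : 0 < t) (r : ℝ) :
    ∫ x in Ioi 0, Gdir t r x = 1 - 2 * gaussTail t r := by
  have hrefl : ∫ x in Ioi 0, gauss t (r - x) = gaussTail t (-r) := by
    simp_rw [← neg_sub _ r, gauss_neg]
    simpa using setIntegral_Ioi_gauss_sub t 0 r
  have hshift : ∫ x in Ioi 0, gauss t (r + x) = gaussTail t r := by
    simpa [add_comm] using setIntegral_Ioi_gauss_add t 0 r
  simp only [Gdir]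
  rw [integral_sub ((integrable_gauss t).comp_sub_left r).integrableOn
    ((integrable_gauss t).comp_add_left r).integrableOn, hrefl, hshift]
  linarith [gaussTail_add_gaussTail_neg ht r]

lemma gaussTail_sub_add_gaussTail_add (t r s : ℝ) :
    gaussTail t (r - s) + gaussTail t (r + s) = 2 * gaussTail t r + ∫ x in 0..s, Gdir t r x := by
  have hint : ∀ b, IntegrableOn (gauss t) (Ioi b) := fun _ => (integrable_gauss t).integrableOn
  have hleft := intervalIntegral.integral_Ioi_sub_Ioi' (hint (r - s)) (hint r)
  have hright := intervalIntegral.integral_Ioi_sub_Ioi' (hint r) (hint (r + s))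
  simp only [Gdir]
  rw [intervalIntegral.integral_sub ((integrable_gauss t).comp_sub_left r).intervalIntegrable
    ((integrable_gauss t).comp_add_left r).intervalIntegrable,
    intervalIntegral.integral_comp_sub_left, intervalIntegral.integral_comp_add_left]
  simp only [gaussTail, sub_zero, add_zero] at hleft hright ⊢
  linarith

lemma integrable_gaussTail_mul {μ : Measure ℝ} (ht : 0 < t) (hρ : Integrable ρ μ) (r : ℝ) :
    Integrable (fun s => (gaussTail t (r - s) + gaussTail t (r + s)) * ρ s) μ := by
  have hmeas : Measurable fun s => gaussTail t (r - s) + gaussTail t (r + s) :=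
    ((antitone_gaussTail t).measurable.comp (measurable_const.sub measurable_id)).add
      ((antitone_gaussTail t).measurable.comp (measurable_const.add measurable_id))
  refine hρ.bdd_mul (c := 2) hmeas.aestronglyMeasurable (Eventually.of_forall fun s => ?_)
  rw [Real.norm_of_nonneg (add_nonneg (gaussTail_nonneg t _) (gaussTail_nonneg t _))]
  linarith [gaussTail_le_one ht (r - s), gaussTail_le_one ht (r + s)]

lemma integrable_Gneum_mul_prod {ν : Measure ℝ} [SFinite ν] (ht : 0 < t) (hρ : Integrable ρ ν)
    (r : ℝ) :
    Integrable (fun p : ℝ × ℝ => Gneum t p.1 p.2 * ρ p.2) ((volume.restrict (Ioi r)).prod ν) := by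
  refine (integrable_prod_iff' (f := fun p : ℝ × ℝ => Gneum t p.1 p.2 * ρ p.2)
    ((continuous_Gneum t).aestronglyMeasurable.mul hρ.aestronglyMeasurable.comp_snd)).2
    ⟨Eventually.of_forall fun s => (integrable_Gneum ht.le s).integrableOn.mul_const (ρ s), ?_⟩
  have hnorm : ∀ s, ∫ x in Ioi r, ‖Gneum t x s * ρ s‖
      = (gaussTail t (r - s) + gaussTail t (r + s)) * ‖ρ s‖ := fun s => by
    simp_rw [norm_mul, Real.norm_of_nonneg (Gneum_nonneg t _ s)]
    rw [integral_mul_const, setIntegral_Ioi_Gneum ht.le]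
  simp_rw [hnorm]
  exact integrable_gaussTail_mul ht hρ.norm r

lemma setIntegral_Ioi_heat_snd (ht : 0 < t) (w : UEl) (hw : IntegrableOn w.2 (Ioi 0)) (r : ℝ) :
    ∫ x in Ioi r, (heat t w).2 x
      = w.1 * (2 * gaussTail t r)
        + ∫ s in Ioi 0, (gaussTail t (r - s) + gaussTail t (r + s)) * w.2 s := by
  have hprod := integrable_Gneum_mul_prod ht hw r
  rw [heat, integral_add ((integrable_Gneum ht.le 0).integrableOn.const_mul _)
    hprod.integral_prod_left, integral_const_mul, setIntegral_Ioi_Gneum ht.le, sub_zero, add_zero,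
    ← two_mul, integral_integral_swap hprod]
  congr 1
  refine integral_congr_ae (Eventually.of_forall fun s => ?_)
  simp only
  rw [integral_mul_const, setIntegral_Ioi_Gneum ht.le]

lemma setIntegral_gaussTail_mul (ht : 0 < t) (hρ : IntegrableOn ρ (Ioi 0)) (r : ℝ) :
    ∫ s in Ioi 0, (gaussTail t (r - s) + gaussTail t (r + s)) * ρ s
      = 2 * gaussTail t r * (∫ s in Ioi 0, ρ s)
        + ∫ x in Ioi 0, Gdir t r x * ∫ s in Ioi x, ρ s := by
  have hsplit : ∀ s, (gaussTail t (r - s) + gaussTail t (r + s)) * ρ s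
      = 2 * gaussTail t r * ρ s + ρ s * ∫ x in 0..s, Gdir t r x := fun s => by
    rw [gaussTail_sub_add_gaussTail_add]; ring
  have hrest : IntegrableOn (fun s => ρ s * ∫ x in 0..s, Gdir t r x) (Ioi 0) :=
    IntegrableOn.congr_fun
      ((integrable_gaussTail_mul ht hρ r).sub (hρ.const_mul (2 * gaussTail t r)))
      (fun s _ => by simp only [Pi.sub_apply, hsplit]; ring) measurableSet_Ioi
  simp_rw [hsplit]
  rw [integral_add (hρ.const_mul _) hrest, integral_const_mul,
    setIntegral_mul_intervalIntegral_eq hρ (integrable_Gdir t r).integrableOn]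

lemma tailF_zero (w : UEl) : tailF w 0 = w.1 + ∫ x in Ioi 0, w.2 x := by
  simp [tailF]

lemma tailF_of_ne_zero (w : UEl) {r : ℝ} (hr : r ≠ 0) : tailF w r = ∫ x in Ioi r, w.2 x := by
  simp [tailF, hr]

lemma tailF_heat (ht : 0 < t) (w : UEl) (hw : IntegrableOn w.2 (Ioi 0)) (r : ℝ) :
    tailF (heat t w) r
      = 2 * gaussTail t r * tailF w 0 + ∫ x in Ioi 0, Gdir t r x * tailF w x := by
  have htail : ∫ x in Ioi 0, Gdir t r x * tailF w x
      = ∫ x in Ioi 0, Gdir t r x * ∫ s in Ioi x, w.2 s :=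
    setIntegral_congr_fun measurableSet_Ioi fun x hx => by rw [tailF_of_ne_zero w (hx.ne')]
  rw [tailF, show (heat t w).1 = 0 from rfl, ite_self, zero_add, setIntegral_Ioi_heat_snd ht w hw,
    setIntegral_gaussTail_mul ht hw, tailF_zero, htail]
  ring

lemma integrableOn_Gdir_mul_tailF (t r : ℝ) (w : UEl) (hw : IntegrableOn w.2 (Ioi 0)) :
    IntegrableOn (fun x => Gdir t r x * tailF w x) (Ioi 0) :=
  (integrableOn_mul_setIntegral_Ioi hw (integrable_Gdir t r).integrableOn).congr_fun
    (fun x hx => by rw [tailF_of_ne_zero w (hx.ne')]) measurableSet_Ioi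

end NeumannHeat

end

open NeumannHeat

theorem heat_monotone_mod_general (u v : UEl) (hu : memU u) (hv : memU v)
    (m : ℝ) (hle : UleMod u v m) :
    ∀ t : ℝ, 0 < t → UleMod (heat t u) (heat t v) m := by
  intro t ht r hr
  have hpos : ∀ᵐ x ∂volume.restrict (Ioi (0 : ℝ)), 0 < x :=
    ae_restrict_mem measurableSet_Ioi
  rw [tailF_heat ht u hu.2.2.1, tailF_heat ht v hv.2.2.1]
  exact mul_add_integral_mul_le_add (by linarith [gaussTail_nonneg t r])
    (hpos.mono fun x hx => Gdir_nonneg t hr hx.le) (by rw [setIntegral_Ioi_Gdir ht]; ring)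
    (integrable_Gdir t r).integrableOn (integrableOn_Gdir_mul_tailF t r u hu.2.2.1)
    (integrableOn_Gdir_mul_tailF t r v hv.2.2.1) (hle 0 le_rfl)
    (hpos.mono fun x hx => hle x hx.le)

/-- the mass-transport order modulo `m` is preserved by the
Neumann heat semigroup. -/
theorem heat_monotone_mod (u v : UEl) (hu : memU u) (hv : memU v)
    (m : ℝ) (hm : 0 < m) (hm' : m ≤ ∫ r in Set.Ioi (0:ℝ), u.2 r)
    (hle : UleMod u v m) :
    ∀ t : ℝ, 0 < t → UleMod (heat t u) (heat t v) m :=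
  heat_monotone_mod_general u v hu hv m hle
end
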